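/- For every instance (G, T^1,…,T^K, c) of the Steiner Forest problem, Proj_x(𝔏^{sedc}) ⊆ Proj_x(𝔏^{edc}); moreover there exists an instance for which the containment is strict, i.e. Proj_x(𝔏^{edc}) ⊋ Proj_x(𝔏^{sedc}). -/

import Mathlib

open Finset
open scoped Classical

noncomputable section

variable {V : Type} [Fintype V] [DecidableEq V]

/-- `g(δ⁺(S))`: the value of the arc vector `g` on the arcs leaving `S`. -/
def acutOut (g : V → V → ℝ) (S : Finset V) : ℝ :=
  ∑ i ∈ S, ∑ j ∈ Sᶜ, g i j

/-- Membership in the extended directed cut polytope `𝔏^{edc}`. -/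
def memLedc (G : SimpleGraph V) {K : ℕ} (T : Fin K → Finset V) (r : Fin K → V)
    (x : Sym2 V → ℝ) (y : V → V → ℝ) (z : Fin K → Fin K → ℝ) : Prop :=
  -- variable bounds
  (∀ e ∈ G.edgeSet, 0 ≤ x e ∧ x e ≤ 1) ∧
  (∀ i j : V, ¬ G.Adj i j → y i j = 0) ∧
  (∀ i j : V, 0 ≤ y i j ∧ y i j ≤ 1) ∧
  (∀ k l : Fin K, k ≤ l → 0 ≤ z k l ∧ z k l ≤ 1) ∧
  -- (1)  y(δ⁺(S)) ≥ Σ_{ℓ ≤ k, r^ℓ ∈ S} z_{ℓk} whenever T^k ∩ S ≠ T^k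
  (∀ k : Fin K, ∀ S : Finset V, T k ∩ S ≠ T k →
    (∑ l ∈ (Finset.Iic k).filter (fun l => r l ∈ S), z l k) ≤ acutOut y S) ∧
  -- (2)  Σ_{ℓ ≤ k} z_{ℓk} = 1
  (∀ k : Fin K, (∑ l ∈ Finset.Iic k, z l k) = 1) ∧
  -- (3)  z_{kk} ≥ z_{kℓ} for k ∈ [K] \ {1, K} and ℓ ≥ k + 1
  (∀ k l : Fin K, k.val ≠ 0 → k.val ≠ K - 1 → k < l → z k l ≤ z k k) ∧
  -- (4)  y_{ij} + y_{ji} ≤ x_{ij}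
  (∀ i j : V, G.Adj i j → y i j + y j i ≤ x s(i, j))

/-- All components of a point of `𝔏^{edc}` lie in `{0,1}`. -/
def LedcIntegral (G : SimpleGraph V) {K : ℕ}
    (x : Sym2 V → ℝ) (y : V → V → ℝ) (z : Fin K → Fin K → ℝ) : Prop :=
  (∀ e ∈ G.edgeSet, x e = 0 ∨ x e = 1) ∧
  (∀ i j : V, y i j = 0 ∨ y i j = 1) ∧
  (∀ k l : Fin K, k ≤ l → (z k l = 0 ∨ z k l = 1))

/-- Membership in the strengthened extended directed cut polytope `𝔏^{sedc}`. -/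
def memLsedc (G : SimpleGraph V) {K : ℕ} (T : Fin K → Finset V) (r : Fin K → V)
    (x : Sym2 V → ℝ) (y : Fin K → V → V → ℝ) (z : Fin K → Fin K → ℝ) : Prop :=
  -- variable bounds
  (∀ e ∈ G.edgeSet, 0 ≤ x e ∧ x e ≤ 1) ∧
  (∀ (k : Fin K) (i j : V), ¬ G.Adj i j → y k i j = 0) ∧
  (∀ (k : Fin K) (i j : V), 0 ≤ y k i j ∧ y k i j ≤ 1) ∧
  (∀ k l : Fin K, k ≤ l → 0 ≤ z k l ∧ z k l ≤ 1) ∧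
  -- (1)  y^k(δ⁺(S)) ≥ z_{kℓ} whenever r^k ∈ S and S ∩ T^ℓ ≠ T^ℓ
  (∀ k l : Fin K, k ≤ l → ∀ S : Finset V, r k ∈ S → T l ∩ S ≠ T l →
    z k l ≤ acutOut (y k) S) ∧
  -- (2)  Σ_{ℓ ≤ k} z_{ℓk} = 1
  (∀ k : Fin K, (∑ l ∈ Finset.Iic k, z l k) = 1) ∧
  -- (3)  z_{kk} ≥ z_{kℓ} for k ∈ [K] \ {1, K} and ℓ ≥ k + 1
  (∀ k l : Fin K, k.val ≠ 0 → k.val ≠ K - 1 → k < l → z k l ≤ z k k) ∧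
  -- (4)  Σ_k (y^k_{ij} + y^k_{ji}) ≤ x_{ij}
  (∀ i j : V, G.Adj i j → (∑ k : Fin K, (y k i j + y k j i)) ≤ x s(i, j))

/-- All components of a point of `𝔏^{sedc}` lie in `{0,1}`. -/
def LsedcIntegral (G : SimpleGraph V) {K : ℕ}
    (x : Sym2 V → ℝ) (y : Fin K → V → V → ℝ) (z : Fin K → Fin K → ℝ) : Prop :=
  (∀ e ∈ G.edgeSet, x e = 0 ∨ x e = 1) ∧
  (∀ (k : Fin K) (i j : V), y k i j = 0 ∨ y k i j = 1) ∧
  (∀ k l : Fin K, k ≤ l → (z k l = 0 ∨ z k l = 1))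

/-! ### Auxiliary material -/

lemma acutOut_nonneg {V : Type} [Fintype V] [DecidableEq V]
    (g : V → V → ℝ) (hg : ∀ i j, 0 ≤ g i j) (S : Finset V) :
    0 ≤ acutOut g S := by
  refine Finset.sum_nonneg fun i _ => Finset.sum_nonneg fun j _ => hg i j

lemma acutOut_sum {V : Type} [Fintype V] [DecidableEq V] {K : ℕ}
    (y : Fin K → V → V → ℝ) (S : Finset V) :
    acutOut (fun i j => ∑ k, y k i j) S = ∑ k, acutOut (y k) S := by
  unfold acutOut
  calc (∑ i ∈ S, ∑ j ∈ Sᶜ, ∑ k, y k i j)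
      = ∑ i ∈ S, ∑ k, ∑ j ∈ Sᶜ, y k i j :=
        Finset.sum_congr rfl fun i _ => Finset.sum_comm
    _ = ∑ k, ∑ i ∈ S, ∑ j ∈ Sᶜ, y k i j := Finset.sum_comm

lemma acutOut_eq_ite {V : Type} [Fintype V] [DecidableEq V]
    (g : V → V → ℝ) (S : Finset V) :
    acutOut g S = ∑ i : V, ∑ j : V, if i ∈ S ∧ j ∉ S then g i j else 0 := by
  unfold acutOut
  rw [eq_comm]
  calc (∑ i : V, ∑ j : V, if i ∈ S ∧ j ∉ S then g i j else 0)
      = ∑ i : V, if i ∈ S then (∑ j ∈ Sᶜ, g i j) else 0 := by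
        refine Finset.sum_congr rfl fun i _ => ?_
        by_cases hi : i ∈ S
        · simp only [hi, true_and, if_true]
          have : ∀ j : V, (if j ∉ S then g i j else 0) = (if j ∈ Sᶜ then g i j else 0) := by
            intro j; simp [Finset.mem_compl]
          rw [Finset.sum_congr rfl fun j _ => this j, Finset.sum_ite_mem, Finset.univ_inter]
        · simp [hi]
    _ = ∑ i ∈ S, ∑ j ∈ Sᶜ, g i j := by
        rw [Finset.sum_ite_mem, Finset.univ_inter]

/-- The subset direction, as a standalone lemma. -/
lemma sedc_to_edc {V : Type} [Fintype V] [DecidableEq V] (G : SimpleGraph V) (K : ℕ)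
    (T : Fin K → Finset V) (r : Fin K → V) (x : Sym2 V → ℝ)
    (y : Fin K → V → V → ℝ) (z : Fin K → Fin K → ℝ)
    (h : memLsedc G T r x y z) :
    memLedc G T r x (fun i j => ∑ k, y k i j) z := by
  obtain ⟨hx, hy0, hyb, hzb, h1, h2, h3, h4⟩ := h
  refine ⟨hx, ?_, ?_, hzb, ?_, h2, h3, ?_⟩
  · intro i j hij
    exact Finset.sum_eq_zero fun k _ => hy0 k i j hij
  · intro i j
    refine ⟨Finset.sum_nonneg fun k _ => (hyb k i j).1, ?_⟩
    show (∑ k : Fin K, y k i j) ≤ 1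
    by_cases hij : G.Adj i j
    · have hle : (∑ k, y k i j) ≤ ∑ k : Fin K, (y k i j + y k j i) :=
        Finset.sum_le_sum fun k _ => le_add_of_nonneg_right (hyb k j i).1
      have := h4 i j hij
      have hx1 := (hx s(i, j) ((SimpleGraph.mem_edgeSet G).mpr hij)).2
      linarith
    · rw [Finset.sum_eq_zero fun k _ => hy0 k i j hij]; norm_num
  · intro k S hS
    rw [acutOut_sum]
    have step1 : (∑ l ∈ (Finset.Iic k).filter (fun l => r l ∈ S), z l k)
        ≤ ∑ l ∈ (Finset.Iic k).filter (fun l => r l ∈ S), acutOut (y l) S := by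
      refine Finset.sum_le_sum fun l hl => ?_
      rw [Finset.mem_filter, Finset.mem_Iic] at hl
      exact h1 l k hl.1 S hl.2 hS
    have step2 : (∑ l ∈ (Finset.Iic k).filter (fun l => r l ∈ S), acutOut (y l) S)
        ≤ ∑ l : Fin K, acutOut (y l) S := by
      refine Finset.sum_le_sum_of_subset_of_nonneg (Finset.subset_univ _) ?_
      intro l _ _
      exact acutOut_nonneg _ (fun i j => (hyb l i j).1) S
    linarith
  · intro i j hij
    show (∑ k : Fin K, y k i j) + (∑ k : Fin K, y k j i) ≤ x s(i, j)
    have := h4 i j hij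
    rw [Finset.sum_add_distrib] at this
    linarith

/-! ### The separating instance -/

/-- Adjacency (as a `Bool`) of the example graph: a path `1 - 0 - 2 - 3`
    together with the edge `{1,3}` (a 4-cycle `0-1-3-2-0`). -/
def gadj (i j : Fin 4) : Bool :=
  (i = 0 && j = 1) || (i = 1 && j = 0) || (i = 0 && j = 2) || (i = 2 && j = 0) ||
  (i = 1 && j = 3) || (i = 3 && j = 1) || (i = 2 && j = 3) || (i = 3 && j = 2)

lemma gadj_symm : ∀ i j : Fin 4, gadj i j = gadj j i := by decide

lemma gadj_irrefl : ∀ i : Fin 4, gadj i i = false := by decide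

def Gex : SimpleGraph (Fin 4) :=
  ⟨fun i j => gadj i j = true,
   ⟨fun i j h => by
     have h' : gadj i j = true := h
     show gadj j i = true
     rwa [gadj_symm j i]⟩,
   ⟨fun i h => by
     have h' : gadj i i = true := h
     rw [gadj_irrefl] at h'
     cases h'⟩⟩

instance : DecidableRel Gex.Adj := fun i j => inferInstanceAs (Decidable (gadj i j = true))

/-- Terminal sets of the example. -/
def Tex : Fin 2 → Finset (Fin 4) := ![{0, 2}, {1, 3}]

/-- Roots of the example. -/
def rex : Fin 2 → Fin 4 := ![0, 1]

/-- The separating fractional point. -/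
def xex : Sym2 (Fin 4) → ℝ := fun e => if e = s(2, 3) then 1 else 1/2

/-- The `edc` arc vector witnessing `xex ∈ Proj_x(𝔏^{edc})`. -/
def yex : Fin 4 → Fin 4 → ℝ := fun i j =>
  if (i = 0 ∧ j = 1) ∨ (i = 0 ∧ j = 2) ∨ (i = 1 ∧ j = 3) ∨ (i = 2 ∧ j = 3) ∨ (i = 3 ∧ j = 2)
  then 1/2 else 0

/-- The `edc` `z`-vector. -/
def zex : Fin 2 → Fin 2 → ℝ := fun k l =>
  if k = 0 ∧ l = 0 then 1 else if k = 0 ∧ l = 1 then 1/2 else if k = 1 ∧ l = 1 then 1/2 else 0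

lemma Iic0 : Finset.Iic (0 : Fin 2) = {0} := by decide

lemma Iic1 : Finset.Iic (1 : Fin 2) = {0, 1} := by decide

lemma xex_mem_edc : memLedc Gex Tex rex xex yex zex := by
  refine ⟨?_, ?_, ?_, ?_, ?_, ?_, ?_, ?_⟩
  · intro e _
    unfold xex; split <;> norm_num
  · intro i j h
    fin_cases i <;> fin_cases j <;>
      first
        | (refine absurd ?_ h; decide)
        | (simp [yex]; try norm_num; done)
  · intro i j
    constructor <;> (unfold yex; split <;> norm_num)
  · intro k l _
    constructor <;> (unfold zex; split_ifs <;> norm_num)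
  · intro k S hS
    have hk : k = 0 ∨ k = 1 := by omega
    by_cases h0 : (0 : Fin 4) ∈ S <;> by_cases h1 : (1 : Fin 4) ∈ S <;>
      by_cases h2 : (2 : Fin 4) ∈ S <;> by_cases h3 : (3 : Fin 4) ∈ S <;>
      rcases hk with rfl | rfl <;>
      first
        | (refine absurd (Finset.inter_eq_left.mpr ?_) hS;
           simp [Tex, Finset.insert_subset_iff, h0, h1, h2, h3]; done)
        | (simp only [Iic0, Iic1, acutOut_eq_ite, Fin.sum_univ_four, Finset.filter_insert,
             Finset.filter_singleton, rex, Matrix.cons_val_zero, Matrix.cons_val_one,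
             Matrix.head_cons, h0, h1, h2, h3];
           simp [yex, zex, h0, h1, h2, h3] <;> norm_num)
  · intro k
    have hk : k = 0 ∨ k = 1 := by omega
    rcases hk with rfl | rfl
    · rw [Iic0, Finset.sum_singleton]; norm_num [zex]
    · rw [Iic1, Finset.sum_insert (by decide), Finset.sum_singleton]; norm_num [zex]
  · intro k l h0 h1 _
    have := k.isLt
    omega
  · intro i j hij
    fin_cases i <;> fin_cases j <;>
      first
        | (refine absurd hij ?_; decide)
        | (simp [yex, xex, Sym2.eq_iff]; try norm_num; done)

lemma xex_not_mem_sedc :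
    ¬ ∃ (y : Fin 2 → Fin 4 → Fin 4 → ℝ) (z : Fin 2 → Fin 2 → ℝ),
      memLsedc Gex Tex rex xex y z := by
  rintro ⟨y, z, hx, hy0, hyb, hzb, h1, h2, h3, h4⟩
  -- z 0 0 = 1
  have hz00 : z 0 0 = 1 := by
    have := h2 0
    rwa [Iic0, Finset.sum_singleton] at this
  have hz11 : z 0 1 + z 1 1 = 1 := by
    have := h2 1
    rwa [Iic1, Finset.sum_insert (by decide), Finset.sum_singleton] at this
  -- cut {0,1} for commodity 1 (k = 0, l = 0)
  have hA : z 0 0 ≤ acutOut (y 0) {0, 1} :=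
    h1 0 0 le_rfl {0, 1} (by decide) (by decide)
  -- cut {0,1} for commodity 2 (k = 1, l = 1)
  have hB : z 1 1 ≤ acutOut (y 1) {0, 1} :=
    h1 1 1 le_rfl {0, 1} (by decide) (by decide)
  -- cut {0,2,3} for k = 0, l = 1
  have hC : z 0 1 ≤ acutOut (y 0) {0, 2, 3} :=
    h1 0 1 (by decide) {0, 2, 3} (by decide) (by decide)
  -- evaluate the cuts
  have eA : acutOut (y 0) {0, 1} = y 0 0 2 + y 0 0 3 + y 0 1 2 + y 0 1 3 := by
    rw [acutOut_eq_ite]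
    simp [Fin.sum_univ_four]
    try ring
  have eB : acutOut (y 1) {0, 1} = y 1 0 2 + y 1 0 3 + y 1 1 2 + y 1 1 3 := by
    rw [acutOut_eq_ite]
    simp [Fin.sum_univ_four]
    try ring
  have eC : acutOut (y 0) {0, 2, 3} = y 0 0 1 + y 0 2 1 + y 0 3 1 := by
    rw [acutOut_eq_ite]
    simp [Fin.sum_univ_four]
    try ring
  -- non-adjacent arcs vanish
  have z003 : y 0 0 3 = 0 := hy0 0 0 3 (by decide)
  have z012 : y 0 1 2 = 0 := hy0 0 1 2 (by decide)
  have z103 : y 1 0 3 = 0 := hy0 1 0 3 (by decide)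
  have z112 : y 1 1 2 = 0 := hy0 1 1 2 (by decide)
  have z021 : y 0 2 1 = 0 := hy0 0 2 1 (by decide)
  -- capacity constraints
  have c01 : y 0 0 1 + y 0 1 0 + (y 1 0 1 + y 1 1 0) ≤ 1/2 := by
    have := h4 0 1 (by decide)
    rw [Fin.sum_univ_two] at this
    have hx01 : xex s(0, 1) = 1/2 := by simp [xex, Sym2.eq_iff]
    linarith
  have c02 : y 0 0 2 + y 0 2 0 + (y 1 0 2 + y 1 2 0) ≤ 1/2 := by
    have := h4 0 2 (by decide)
    rw [Fin.sum_univ_two] at this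
    have hx02 : xex s(0, 2) = 1/2 := by simp [xex, Sym2.eq_iff]
    linarith
  have c13 : y 0 1 3 + y 0 3 1 + (y 1 1 3 + y 1 3 1) ≤ 1/2 := by
    have := h4 1 3 (by decide)
    rw [Fin.sum_univ_two] at this
    have hx13 : xex s(1, 3) = 1/2 := by simp [xex, Sym2.eq_iff]
    linarith
  -- nonnegativity
  have n1 := (hyb 0 1 0).1
  have n2 := (hyb 1 0 1).1
  have n3 := (hyb 1 1 0).1
  have n4 := (hyb 0 2 0).1
  have n5 := (hyb 1 2 0).1
  have n6 := (hyb 1 3 1).1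
  have n7 := (hyb 0 0 2).1
  have n8 := (hyb 0 1 3).1
  -- the Farkas contradiction
  rw [eA, z003, z012] at hA
  rw [eB, z103, z112] at hB
  rw [eC, z021] at hC
  linarith

/-- The instance exhibits a strict inclusion. -/
lemma strict_example :
    {x : Sym2 (Fin 4) → ℝ | ∃ y z, memLsedc Gex Tex rex x y z} ⊂
      {x : Sym2 (Fin 4) → ℝ | ∃ y z, memLedc Gex Tex rex x y z} := by
  rw [Set.ssubset_def]
  constructor
  · rintro x ⟨y, z, h⟩
    exact ⟨_, z, sedc_to_edc _ _ _ _ _ _ _ h⟩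
  · intro hsub
    have hx : xex ∈ {x : Sym2 (Fin 4) → ℝ | ∃ y z, memLedc Gex Tex rex x y z} :=
      ⟨yex, zex, xex_mem_edc⟩
    exact xex_not_mem_sedc (hsub hx)
/-- For every Steiner Forest instance
`Proj_x(𝔏^{sedc}) ⊆ Proj_x(𝔏^{edc})`, and there is an instance where the
containment is strict. -/
theorem proj_Lsedc_subset_proj_Ledc_and_exists_strict :
    (∀ (V : Type) [Fintype V] [DecidableEq V] (G : SimpleGraph V) (K : ℕ)
        (T : Fin K → Finset V) (r : Fin K → V),
      (∀ k, r k ∈ T k) → (∀ k l : Fin K, k ≠ l → Disjoint (T k) (T l)) →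
      {x : Sym2 V → ℝ | ∃ y z, memLsedc G T r x y z} ⊆
        {x : Sym2 V → ℝ | ∃ y z, memLedc G T r x y z}) ∧
    (∃ (n : ℕ) (G : SimpleGraph (Fin n)) (K : ℕ)
        (T : Fin K → Finset (Fin n)) (r : Fin K → Fin n),
      (∀ k, r k ∈ T k) ∧ (∀ k l : Fin K, k ≠ l → Disjoint (T k) (T l)) ∧
      {x : Sym2 (Fin n) → ℝ | ∃ y z, memLsedc G T r x y z} ⊂
        {x : Sym2 (Fin n) → ℝ | ∃ y z, memLedc G T r x y z}) := by
  constructor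
  · intro V _ _ G K T r _ _
    rintro x ⟨y, z, h⟩
    exact ⟨_, z, sedc_to_edc _ _ _ _ _ _ _ h⟩
  · exact ⟨4, Gex, 2, Tex, rex, by decide, by decide, strict_example⟩
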